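/- For all real x ≥ 0 and t ≥ 0, ∫_0^∞ exp(−u) · J_0(2√(tu)) · J_0(2√(xu)) du = exp(−x − t) · I_0(2√(xt)), and the integral converges. -/

import Mathlib

open MeasureTheory Real
open scoped ENNReal NNReal

/-- Bessel function of the first kind of integer order `m`. -/
noncomputable def besselJ (m : ℕ) (x : ℝ) : ℝ :=
  ∑' k : ℕ, (-1 : ℝ) ^ k * (x / 2) ^ (m + 2 * k) / (Nat.factorial k * Nat.factorial (m + k))

/-- Modified Bessel function of the first kind of integer order `n`. -/
noncomputable def besselI (n : ℕ) (x : ℝ) : ℝ :=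
  ∑' k : ℕ, (x / 2) ^ (n + 2 * k) / (Nat.factorial k * Nat.factorial (n + k))

namespace BesselProofAux

open Finset Set

/-! ### Combinatorial lemmas -/

lemma choose_le_two_pow' (n i : ℕ) : n.choose i ≤ 2 ^ n := by
  rcases le_or_gt i n with h | h
  · calc n.choose i ≤ ∑ m ∈ range (n+1), n.choose m :=
        Finset.single_le_sum (fun m _ => Nat.zero_le _) (Finset.mem_range.mpr (by omega))
    _ = 2 ^ n := Nat.sum_range_choose n
  · rw [Nat.choose_eq_zero_of_lt h]; positivity

lemma vandermonde' (k j : ℕ) :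
    ∑ n ∈ range (min k j + 1), k.choose n * j.choose n = (k + j).choose k := by
  have e1 : ∑ n ∈ range (min k j + 1), k.choose n * j.choose n
      = ∑ n ∈ range (k + 1), k.choose n * j.choose n := by
    apply Finset.sum_subset (Finset.range_subset_range.mpr (by omega))
    intro m hm hm'
    simp only [Finset.mem_range] at hm hm'
    have : j < m := by omega
    simp [Nat.choose_eq_zero_of_lt this]
  have e2 : ∑ n ∈ range (k + 1), k.choose n * j.choose n
      = ∑ i ∈ range (k + 1), k.choose i * j.choose (k - i) := by
    rw [← Finset.sum_range_reflect (fun i => k.choose i * j.choose (k - i)) (k+1)]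
    apply Finset.sum_congr rfl
    intro m hm
    simp only [Finset.mem_range] at hm
    have h1 : m ≤ k := by omega
    simp only [Nat.add_sub_cancel]
    rw [Nat.sub_sub_self h1, Nat.choose_symm h1]
  rw [e1, e2, Nat.add_choose_eq, Finset.Nat.sum_antidiagonal_eq_sum_range_succ_mk]

lemma term_eq (x t : ℝ) (k j n : ℕ) (hnk : n ≤ k) (hnj : n ≤ j) :
    (-t)^(k-n)/((k-n).factorial : ℝ) * ((-x)^(j-n)/((j-n).factorial : ℝ) *
      ((x*t)^n/((n.factorial : ℝ) * n.factorial)))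
    = ((-1:ℝ)^(k+j) * (t^k * x^j) / ((k.factorial : ℝ) * j.factorial)) *
      ((k.choose n : ℝ) * (j.choose n : ℝ)) := by
  have hk : ((k.choose n : ℝ) * n.factorial * (k-n).factorial) = (k.factorial : ℝ) := by
    exact_mod_cast congrArg (Nat.cast : ℕ → ℝ) (Nat.choose_mul_factorial_mul_factorial hnk)
  have hj : ((j.choose n : ℝ) * n.factorial * (j-n).factorial) = (j.factorial : ℝ) := by
    exact_mod_cast congrArg (Nat.cast : ℕ → ℝ) (Nat.choose_mul_factorial_mul_factorial hnj)
  have hsign : (-1:ℝ)^(k-n) * (-1:ℝ)^(j-n) = (-1:ℝ)^(k+j) := by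
    rw [← pow_add]
    conv_rhs => rw [show k + j = (k-n) + (j-n) + 2*n by omega, pow_add, pow_mul, neg_one_sq,
      one_pow, mul_one]
  have ht' : t^(k-n) * t^n = t^k := by rw [← pow_add, show k-n+n = k by omega]
  have hx' : x^(j-n) * x^n = x^j := by rw [← pow_add, show j-n+n = j by omega]
  have f1 : ((k-n).factorial : ℝ) ≠ 0 := Nat.cast_ne_zero.mpr (Nat.factorial_ne_zero _)
  have f2 : ((j-n).factorial : ℝ) ≠ 0 := Nat.cast_ne_zero.mpr (Nat.factorial_ne_zero _)
  have f3 : (n.factorial : ℝ) ≠ 0 := Nat.cast_ne_zero.mpr (Nat.factorial_ne_zero _)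
  have f4 : (k.factorial : ℝ) ≠ 0 := Nat.cast_ne_zero.mpr (Nat.factorial_ne_zero _)
  have f5 : (j.factorial : ℝ) ≠ 0 := Nat.cast_ne_zero.mpr (Nat.factorial_ne_zero _)
  have hsign' : (-1:ℝ)^(k-n) * (-1:ℝ)^(j-n) = (-1:ℝ)^k * (-1:ℝ)^j :=
    hsign.trans (pow_add (-1) k j)
  rw [neg_pow t, neg_pow x, mul_pow]
  field_simp
  rw [← hk, ← hj]
  linear_combination ((k.choose n : ℝ) * (j.choose n : ℝ) * ((n.factorial : ℝ))^2 *
      ((k-n).factorial : ℝ) * ((j-n).factorial : ℝ)) *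
    ((x^(j-n) * x^n * ((-1:ℝ)^(k-n) * (-1:ℝ)^(j-n))) * ht' +
     (t^k * ((-1:ℝ)^(k-n) * (-1:ℝ)^(j-n))) * hx' +
     (t^k * x^j) * hsign')

lemma fiber_sum_eq (x t : ℝ) (k j : ℕ) :
    ∑ n ∈ range (min k j + 1), (-t)^(k-n)/((k-n).factorial : ℝ) *
      ((-x)^(j-n)/((j-n).factorial : ℝ) * ((x*t)^n/((n.factorial : ℝ) * n.factorial)))
    = (-1:ℝ)^(k+j) * (t^k * x^j) / (((k.factorial : ℝ) * k.factorial) *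
        ((j.factorial : ℝ) * j.factorial)) * ((k+j).factorial : ℝ) := by
  rw [Finset.sum_congr rfl (fun n hn => term_eq x t k j n
      (by simp only [Finset.mem_range] at hn; omega) (by simp only [Finset.mem_range] at hn; omega)),
    ← Finset.mul_sum]
  have hv : ∑ n ∈ range (min k j + 1), ((k.choose n : ℝ) * (j.choose n : ℝ))
      = (((k+j).choose k : ℕ) : ℝ) := by
    rw [← vandermonde' k j]; push_cast; ring
  rw [hv]
  have hck : (((k+j).choose k : ℕ) : ℝ) * k.factorial * j.factorial = ((k+j).factorial : ℝ) := by
    have := Nat.choose_mul_factorial_mul_factorial (Nat.le_add_right k j)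
    rw [show k + j - k = j by omega] at this
    exact_mod_cast congrArg (Nat.cast : ℕ → ℝ) this
  have f4 : (k.factorial : ℝ) ≠ 0 := Nat.cast_ne_zero.mpr (Nat.factorial_ne_zero _)
  have f5 : (j.factorial : ℝ) ≠ 0 := Nat.cast_ne_zero.mpr (Nat.factorial_ne_zero _)
  rw [← hck]
  field_simp

/-! ### Series expansions -/

lemma exp_tsum (y : ℝ) : Real.exp y = ∑' n : ℕ, y ^ n / (n.factorial : ℝ) := by
  rw [Real.exp_eq_exp_ℝ, NormedSpace.exp_eq_tsum_div]

lemma summable_aux {s : ℝ} (hs : 0 ≤ s) :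
    Summable (fun k : ℕ => s ^ k / ((k.factorial : ℝ) * k.factorial)) := by
  refine Summable.of_nonneg_of_le (fun k => by positivity) (fun k => ?_)
    (Real.summable_pow_div_factorial s)
  have h1 : (1:ℝ) ≤ (k.factorial : ℝ) := by exact_mod_cast k.factorial_pos
  have h2 : (0:ℝ) < (k.factorial : ℝ) := by positivity
  gcongr
  exact le_mul_of_one_le_left h2.le h1

lemma norm_signed_eq {s : ℝ} (hs : 0 ≤ s) (k : ℕ) :
    ‖(-1:ℝ)^k * s ^ k / ((k.factorial : ℝ) * k.factorial)‖
      = s ^ k / ((k.factorial : ℝ) * k.factorial) := by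
  rw [norm_div, norm_mul, norm_pow, norm_neg, norm_one, one_pow, one_mul, norm_pow,
    Real.norm_of_nonneg hs, Real.norm_of_nonneg (by positivity)]

lemma summable_norm_signed {s : ℝ} (hs : 0 ≤ s) :
    Summable (fun k : ℕ => ‖(-1:ℝ)^k * s ^ k / ((k.factorial : ℝ) * k.factorial)‖) :=
  (summable_aux hs).congr fun k => (norm_signed_eq hs k).symm

lemma summable_signed {s : ℝ} (hs : 0 ≤ s) :
    Summable (fun k : ℕ => (-1:ℝ)^k * s ^ k / ((k.factorial : ℝ) * k.factorial)) :=
  Summable.of_norm (summable_norm_signed hs)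

lemma besselJ_sqrt {s : ℝ} (hs : 0 ≤ s) :
    besselJ 0 (2 * Real.sqrt s)
      = ∑' k : ℕ, (-1:ℝ)^k * s ^ k / ((k.factorial : ℝ) * k.factorial) := by
  unfold besselJ
  refine tsum_congr fun k => ?_
  rw [zero_add, zero_add, mul_div_cancel_left₀ _ (two_ne_zero : (2:ℝ) ≠ 0), pow_mul,
    Real.sq_sqrt hs]

lemma besselI_sqrt {s : ℝ} (hs : 0 ≤ s) :
    besselI 0 (2 * Real.sqrt s) = ∑' k : ℕ, s ^ k / ((k.factorial : ℝ) * k.factorial) := by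
  unfold besselI
  refine tsum_congr fun k => ?_
  rw [zero_add, zero_add, mul_div_cancel_left₀ _ (two_ne_zero : (2:ℝ) ≠ 0), pow_mul,
    Real.sq_sqrt hs]

/-! ### Exponential bound for `besselJ` -/

lemma two_pow_factorial (k : ℕ) : ((2*k).factorial : ℕ) ≤ 4^k * k.factorial * k.factorial := by
  have h := Nat.choose_mul_factorial_mul_factorial (Nat.le_add_right k k)
  rw [show k + k - k = k by omega] at h
  calc (2*k).factorial = (k+k).factorial := by rw [two_mul]
  _ = (k+k).choose k * k.factorial * k.factorial := h.symm
  _ ≤ 2^(k+k) * k.factorial * k.factorial := by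
      gcongr
      exact (choose_le_two_pow' (k+k) k).trans_eq rfl
  _ = 4^k * k.factorial * k.factorial := by rw [show k+k = 2*k by omega, pow_mul]; norm_num

lemma tsum_sq_le_exp {s : ℝ} (hs : 0 ≤ s) :
    ∑' k : ℕ, s ^ k / ((k.factorial : ℝ) * k.factorial) ≤ Real.exp (2 * Real.sqrt s) := by
  set y := 2 * Real.sqrt s with hy
  have hy0 : 0 ≤ y := by positivity
  have hsy : s = (y/2)^2 := by
    rw [hy, mul_div_cancel_left₀ _ (two_ne_zero : (2:ℝ) ≠ 0), Real.sq_sqrt hs]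
  have step1 : ∀ k : ℕ, s ^ k / ((k.factorial : ℝ) * k.factorial)
      ≤ y^(2*k) / ((2*k).factorial : ℝ) := by
    intro k
    have h4 : ((2*k).factorial : ℝ) ≤ 4^k * (k.factorial : ℝ) * k.factorial := by
      exact_mod_cast two_pow_factorial k
    have hnum : s ^ k * (4:ℝ)^k = y ^ (2*k) := by
      rw [hsy, ← mul_pow, pow_mul]
      congr 1
      ring
    rw [div_le_div_iff₀ (by positivity) (by positivity)]
    calc s^k * ((2*k).factorial : ℝ) ≤ s^k * (4^k * (k.factorial : ℝ) * k.factorial) := by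
          gcongr
    _ = (s^k * 4^k) * ((k.factorial:ℝ) * k.factorial) := by ring
    _ = y^(2*k) * ((k.factorial:ℝ) * k.factorial) := by rw [hnum]
  have hsum2 : Summable (fun k : ℕ => y^(2*k) / ((2*k).factorial : ℝ)) := by
    apply Summable.of_nonneg_of_le (fun k => by positivity) (fun k => ?_)
      (Real.summable_pow_div_factorial (y^2))
    rw [pow_mul]
    gcongr <;> first | positivity | omega
  calc ∑' k : ℕ, s ^ k / ((k.factorial : ℝ) * k.factorial)
      ≤ ∑' k : ℕ, y^(2*k) / ((2*k).factorial : ℝ) :=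
        Summable.tsum_le_tsum step1 (summable_aux hs) hsum2
  _ ≤ ∑' m : ℕ, y^m / (m.factorial : ℝ) :=
        Summable.tsum_le_tsum_of_inj (fun k => 2*k) (fun a b h => by simpa using h)
          (fun c _ => div_nonneg (pow_nonneg hy0 _) (by positivity)) (fun k => le_rfl) hsum2
          (Real.summable_pow_div_factorial y)
  _ = Real.exp y := (exp_tsum y).symm

lemma abs_besselJ_le {s : ℝ} (hs : 0 ≤ s) :
    |besselJ 0 (2 * Real.sqrt s)| ≤ Real.exp (2 * Real.sqrt s) := by
  rw [besselJ_sqrt hs]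
  calc |∑' k : ℕ, (-1:ℝ)^k * s ^ k / ((k.factorial : ℝ) * k.factorial)|
      ≤ ∑' k : ℕ, ‖(-1:ℝ)^k * s ^ k / ((k.factorial : ℝ) * k.factorial)‖ :=
        norm_tsum_le_tsum_norm (summable_norm_signed hs)
  _ = ∑' k : ℕ, s ^ k / ((k.factorial : ℝ) * k.factorial) := tsum_congr (norm_signed_eq hs)
  _ ≤ Real.exp (2 * Real.sqrt s) := tsum_sq_le_exp hs

lemma sqrt_le_aux {s u : ℝ} (hs : 0 ≤ s) (hu : 0 ≤ u) :
    2 * Real.sqrt (s*u) ≤ 4*s + u/4 := by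
  have h := two_mul_le_add_sq (Real.sqrt (4*s)) (Real.sqrt (u/4))
  rw [Real.sq_sqrt (by positivity), Real.sq_sqrt (by positivity)] at h
  calc 2 * Real.sqrt (s*u) = 2 * (Real.sqrt (4*s) * Real.sqrt (u/4)) := by
        rw [← Real.sqrt_mul (by positivity), show 4*s*(u/4) = s*u by ring]
  _ ≤ 4*s + u/4 := by nlinarith [h]

/-! ### The Gamma integral -/

lemma integrable_exp_pow (m : ℕ) :
    IntegrableOn (fun u => Real.exp (-u) * u ^ m) (Ioi (0:ℝ)) ∧
    ∫ u in Ioi (0:ℝ), Real.exp (-u) * u ^ m = m.factorial := by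
  have key : ∀ u ∈ Ioi (0:ℝ), Real.exp (-u) * u ^ ((m:ℝ) + 1 - 1) = Real.exp (-u) * u ^ m := by
    intro u hu
    rw [add_sub_cancel_right, Real.rpow_natCast]
  constructor
  · exact (Real.GammaIntegral_convergent (by positivity : (0:ℝ) < m + 1)).congr_fun key
      measurableSet_Ioi
  · have h := Real.Gamma_eq_integral (by positivity : (0:ℝ) < m + 1)
    rw [Real.Gamma_nat_eq_factorial] at h
    rw [← setIntegral_congr_fun measurableSet_Ioi key]
    exact h.symm

end BesselProofAux

open BesselProofAux Set Finset

/-- `∫₀^∞ e^(−u) J₀(2√(tu)) J₀(2√(xu)) du = e^(−x−t) I₀(2√(xt))`, and the integral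
converges. -/
theorem integral_exp_besselJ_mul_besselJ (x t : ℝ) (hx : 0 ≤ x) (ht : 0 ≤ t) :
    IntegrableOn
      (fun u : ℝ => Real.exp (-u) * besselJ 0 (2 * Real.sqrt (t * u)) *
        besselJ 0 (2 * Real.sqrt (x * u))) (Set.Ioi 0) ∧
    (∫ u in Set.Ioi (0 : ℝ),
        Real.exp (-u) * besselJ 0 (2 * Real.sqrt (t * u)) * besselJ 0 (2 * Real.sqrt (x * u))) =
      Real.exp (-x - t) * besselI 0 (2 * Real.sqrt (x * t)) := by
  set f : ℝ → ℝ := fun u => Real.exp (-u) * besselJ 0 (2 * Real.sqrt (t * u)) *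
    besselJ 0 (2 * Real.sqrt (x * u)) with hf
  set c : ℕ × ℕ → ℝ := fun p => (-1:ℝ)^(p.1+p.2) * (t^p.1 * x^p.2) /
    (((p.1.factorial : ℝ) * p.1.factorial) * ((p.2.factorial : ℝ) * p.2.factorial)) with hc
  set F : ℕ × ℕ → ℝ → ℝ := fun p u => c p * (Real.exp (-u) * u ^ (p.1 + p.2)) with hF
  -- pointwise series expansion
  have hpt : ∀ u : ℝ, 0 ≤ u → f u = ∑' p : ℕ × ℕ, F p u := by
    intro u hu
    have htu : (0:ℝ) ≤ t*u := mul_nonneg ht hu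
    have hxu : (0:ℝ) ≤ x*u := mul_nonneg hx hu
    simp only [hf]
    rw [besselJ_sqrt htu, besselJ_sqrt hxu, mul_assoc,
      tsum_mul_tsum_of_summable_norm (summable_norm_signed htu) (summable_norm_signed hxu),
      ← tsum_mul_left]
    refine tsum_congr fun p => ?_
    simp only [hF, hc]
    ring
  -- coefficient summability
  have habs : ∀ p : ℕ × ℕ, |c p| * (((p.1+p.2).factorial : ℕ) : ℝ)
      = (t^p.1 * x^p.2) * (((p.1+p.2).factorial : ℕ) : ℝ) /
        (((p.1.factorial : ℝ) * p.1.factorial) * ((p.2.factorial : ℝ) * p.2.factorial)) := by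
    intro p
    simp only [hc]
    rw [abs_div, abs_mul, abs_pow, abs_neg, abs_one, one_pow, one_mul,
      abs_mul, abs_pow, abs_pow, abs_of_nonneg ht, abs_of_nonneg hx,
      abs_of_nonneg (by positivity : (0:ℝ) ≤ ((p.1.factorial : ℝ) * p.1.factorial) *
        ((p.2.factorial : ℝ) * p.2.factorial))]
    ring
  have hw : Summable (fun p : ℕ × ℕ => |c p| * (((p.1+p.2).factorial : ℕ) : ℝ)) := by
    have maj : Summable (fun p : ℕ × ℕ => (2*t)^p.1/(p.1.factorial : ℝ) *
        ((2*x)^p.2/(p.2.factorial : ℝ))) :=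
      Summable.mul_of_nonneg (f := fun k : ℕ => (2*t)^k/(k.factorial : ℝ))
        (g := fun k : ℕ => (2*x)^k/(k.factorial : ℝ))
        (Real.summable_pow_div_factorial (2*t)) (Real.summable_pow_div_factorial (2*x))
        (fun k => by positivity) (fun k => by positivity)
    refine Summable.of_nonneg_of_le (fun p => by positivity) (fun p => ?_) maj
    obtain ⟨k, j⟩ := p
    rw [habs]
    simp only
    have hck : (((k+j).factorial : ℕ) : ℝ) = ((k+j).choose k : ℝ) * k.factorial * j.factorial := by
      have h := Nat.choose_mul_factorial_mul_factorial (Nat.le_add_right k j)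
      rw [show k + j - k = j by omega] at h
      exact_mod_cast congrArg (Nat.cast : ℕ → ℝ) h.symm
    have f4 : (0:ℝ) < (k.factorial : ℝ) := by positivity
    have f5 : (0:ℝ) < (j.factorial : ℝ) := by positivity
    have key : (t^k * x^j) * (((k+j).factorial : ℕ) : ℝ) /
        (((k.factorial : ℝ) * k.factorial) * ((j.factorial : ℝ) * j.factorial))
        = ((k+j).choose k : ℝ) * (t^k/(k.factorial:ℝ) * (x^j/(j.factorial:ℝ))) := by
      rw [hck]
      field_simp
    rw [key]
    calc ((k+j).choose k : ℝ) * (t^k/(k.factorial:ℝ) * (x^j/(j.factorial:ℝ)))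
        ≤ (2:ℝ)^(k+j) * (t^k/(k.factorial:ℝ) * (x^j/(j.factorial:ℝ))) := by
          gcongr
          exact_mod_cast choose_le_two_pow' (k+j) k
    _ = (2*t)^k/(k.factorial : ℝ) * ((2*x)^j/(j.factorial : ℝ)) := by
          rw [pow_add]; ring
  -- measurability of f on Ioi 0
  have haesm : AEStronglyMeasurable f (volume.restrict (Ioi 0)) := by
    apply aestronglyMeasurable_of_tendsto_ae (u := Filter.atTop)
      (f := fun N u => Real.exp (-u) *
        (∑ k ∈ range N, (-1:ℝ)^k * (t*u)^k / ((k.factorial : ℝ) * k.factorial)) *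
        (∑ j ∈ range N, (-1:ℝ)^j * (x*u)^j / ((j.factorial : ℝ) * j.factorial)))
    · intro N
      exact Continuous.aestronglyMeasurable
        (((Real.continuous_exp.comp continuous_neg).mul
          (continuous_finset_sum _ fun k _ => by fun_prop)).mul
          (continuous_finset_sum _ fun k _ => by fun_prop))
    · rw [ae_restrict_iff' measurableSet_Ioi]
      filter_upwards with u hu
      have htu : (0:ℝ) ≤ t*u := mul_nonneg ht (le_of_lt hu)
      have hxu : (0:ℝ) ≤ x*u := mul_nonneg hx (le_of_lt hu)
      simp only [hf]
      rw [besselJ_sqrt htu, besselJ_sqrt hxu]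
      exact (Filter.Tendsto.mul (tendsto_const_nhds.mul
        (summable_signed htu).hasSum.tendsto_sum_nat)
        (summable_signed hxu).hasSum.tendsto_sum_nat)
  -- integrable bound
  have hbound : IntegrableOn (fun u => Real.exp (4*t + 4*x) * Real.exp (-(2⁻¹) * u)) (Ioi 0) :=
    (exp_neg_integrableOn_Ioi 0 (by norm_num : (0:ℝ) < 2⁻¹)).const_mul _
  have hboundle : ∀ u : ℝ, u ∈ Ioi (0:ℝ) →
      ‖f u‖ ≤ Real.exp (4*t + 4*x) * Real.exp (-(2⁻¹) * u) := by
    intro u hu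
    have hu' : (0:ℝ) ≤ u := le_of_lt hu
    have htu : (0:ℝ) ≤ t*u := mul_nonneg ht hu'
    have hxu : (0:ℝ) ≤ x*u := mul_nonneg hx hu'
    have h1 := abs_besselJ_le htu
    have h2 := abs_besselJ_le hxu
    have k1 := sqrt_le_aux ht hu'
    have k2 := sqrt_le_aux hx hu'
    simp only [hf, Real.norm_eq_abs]
    calc |Real.exp (-u) * besselJ 0 (2 * Real.sqrt (t * u)) * besselJ 0 (2 * Real.sqrt (x * u))|
        = Real.exp (-u) * |besselJ 0 (2 * Real.sqrt (t * u))| *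
          |besselJ 0 (2 * Real.sqrt (x * u))| := by
          rw [abs_mul, abs_mul, abs_of_nonneg (Real.exp_pos _).le]
    _ ≤ Real.exp (-u) * Real.exp (2 * Real.sqrt (t*u)) * Real.exp (2 * Real.sqrt (x*u)) := by
          gcongr
    _ = Real.exp (-u + 2 * Real.sqrt (t*u) + 2 * Real.sqrt (x*u)) := by
          rw [← Real.exp_add, ← Real.exp_add]
    _ ≤ Real.exp (4*t + 4*x + -(2⁻¹) * u) := by
          apply Real.exp_le_exp.mpr
          linarith
    _ = Real.exp (4*t + 4*x) * Real.exp (-(2⁻¹) * u) := Real.exp_add _ _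
  have hint : IntegrableOn f (Ioi 0) := by
    apply hbound.mono' haesm
    rw [ae_restrict_iff' measurableSet_Ioi]
    exact Filter.Eventually.of_forall hboundle
  refine ⟨hint, ?_⟩
  -- each F p is measurable
  have hFm : ∀ p : ℕ × ℕ, AEStronglyMeasurable (F p) (volume.restrict (Ioi 0)) := by
    intro p
    refine Continuous.aestronglyMeasurable ?_
    simp only [hF]
    fun_prop
  -- the lintegral bound
  have hFlint : ∀ p : ℕ × ℕ, ∫⁻ u in Ioi (0:ℝ), ‖F p u‖₊
      = ENNReal.ofReal (|c p| * (((p.1+p.2).factorial : ℕ) : ℝ)) := by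
    intro p
    have hI := (integrable_exp_pow (p.1+p.2)).1
    have heq : ∀ᵐ u ∂(volume.restrict (Ioi (0:ℝ))),
        (‖F p u‖₊ : ℝ≥0∞) = ENNReal.ofReal (|c p| * (Real.exp (-u) * u ^ (p.1+p.2))) := by
      rw [ae_restrict_iff' measurableSet_Ioi]
      filter_upwards with u hu
      simp only [hF]
      change ‖c p * (Real.exp (-u) * u ^ (p.1+p.2))‖ₑ = _
      rw [Real.enorm_eq_ofReal_abs]
      congr 1
      rw [abs_mul, abs_of_nonneg
        (mul_nonneg (Real.exp_pos _).le (pow_nonneg (le_of_lt hu) _))]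
    rw [lintegral_congr_ae heq,
      ← MeasureTheory.ofReal_integral_eq_lintegral_ofReal (hI.const_mul _) ?_]
    · congr 1
      rw [MeasureTheory.integral_const_mul, (integrable_exp_pow (p.1+p.2)).2]
    · rw [Filter.EventuallyLE, ae_restrict_iff' measurableSet_Ioi]
      filter_upwards with u hu
      have : (0:ℝ) ≤ Real.exp (-u) * u ^ (p.1+p.2) :=
        mul_nonneg (Real.exp_pos _).le (pow_nonneg (le_of_lt hu) _)
      positivity
  have hlint : ∑' p : ℕ × ℕ, ∫⁻ u in Ioi (0:ℝ), ‖F p u‖₊ ≠ ⊤ := by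
    rw [tsum_congr hFlint, ← ENNReal.ofReal_tsum_of_nonneg (fun p => by positivity) hw]
    exact ENNReal.ofReal_ne_top
  -- apply integral_tsum
  have hIeq : ∫ u in Ioi (0:ℝ), f u = ∑' p : ℕ × ℕ, ∫ u in Ioi (0:ℝ), F p u := by
    rw [setIntegral_congr_fun measurableSet_Ioi (fun u hu => hpt u (le_of_lt hu))]
    exact MeasureTheory.integral_tsum hFm hlint
  have hIval : ∀ p : ℕ × ℕ, ∫ u in Ioi (0:ℝ), F p u
      = c p * (((p.1+p.2).factorial : ℕ) : ℝ) := by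
    intro p
    simp only [hF]
    rw [MeasureTheory.integral_const_mul, (integrable_exp_pow (p.1+p.2)).2]
  rw [hIeq, tsum_congr hIval]
  -- now the combinatorial identity
  set g : ℕ × ℕ × ℕ → ℝ := fun q => (-t)^q.1/(q.1.factorial : ℝ) *
    ((-x)^q.2.1/(q.2.1.factorial : ℝ) *
      ((x*t)^q.2.2/((q.2.2.factorial : ℝ) * q.2.2.factorial))) with hg
  have hxt : (0:ℝ) ≤ x*t := mul_nonneg hx ht
  have hna : ∀ a : ℕ, ‖(-t)^a/(a.factorial : ℝ)‖ = t^a/(a.factorial : ℝ) := by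
    intro a
    rw [norm_div, norm_pow, norm_neg, Real.norm_of_nonneg ht,
      Real.norm_of_nonneg (by positivity : (0:ℝ) ≤ (a.factorial : ℝ))]
  have hnb : ∀ b : ℕ, ‖(-x)^b/(b.factorial : ℝ)‖ = x^b/(b.factorial : ℝ) := by
    intro b
    rw [norm_div, norm_pow, norm_neg, Real.norm_of_nonneg hx,
      Real.norm_of_nonneg (by positivity : (0:ℝ) ≤ (b.factorial : ℝ))]
  have hnc : ∀ n : ℕ, ‖(x*t)^n/((n.factorial : ℝ) * n.factorial)‖
      = (x*t)^n/((n.factorial : ℝ) * n.factorial) := by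
    intro n
    rw [Real.norm_of_nonneg (by positivity)]
  have hsa : Summable (fun a : ℕ => ‖(-t)^a/(a.factorial : ℝ)‖) :=
    (Real.summable_pow_div_factorial t).congr fun a => (hna a).symm
  have hsb : Summable (fun b : ℕ => ‖(-x)^b/(b.factorial : ℝ)‖) :=
    (Real.summable_pow_div_factorial x).congr fun b => (hnb b).symm
  have hsc : Summable (fun n : ℕ => ‖(x*t)^n/((n.factorial : ℝ) * n.factorial)‖) :=
    (summable_aux hxt).congr fun n => (hnc n).symm
  have hsbc : Summable (fun r : ℕ × ℕ => ‖(-x)^r.1/(r.1.factorial : ℝ) *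
      ((x*t)^r.2/((r.2.factorial : ℝ) * r.2.factorial))‖) := by
    refine (Summable.mul_of_nonneg (f := fun b : ℕ => x^b/(b.factorial : ℝ))
      (g := fun n : ℕ => (x*t)^n/((n.factorial : ℝ) * n.factorial))
      (Real.summable_pow_div_factorial x) (summable_aux hxt)
      (fun b => by positivity) (fun n => by positivity)).congr fun r => ?_
    rw [norm_mul, hnb, hnc]
  have hsg : Summable g := by
    apply Summable.of_norm
    refine ((Summable.mul_of_nonneg (f := fun a : ℕ => t^a/(a.factorial : ℝ))
      (g := fun r : ℕ × ℕ => ‖(-x)^r.1/(r.1.factorial : ℝ) *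
        ((x*t)^r.2/((r.2.factorial : ℝ) * r.2.factorial))‖)
      (Real.summable_pow_div_factorial t) hsbc (fun a => by positivity)
      (fun r => norm_nonneg _)).congr fun q => ?_)
    simp only [hg]
    rw [norm_mul, norm_mul, norm_mul, hna, hnb, hnc]
  have hT : ∑' q : ℕ × ℕ × ℕ, g q
      = Real.exp (-x - t) * besselI 0 (2 * Real.sqrt (x*t)) := by
    have e1 : ∑' q : ℕ × ℕ × ℕ, g q = (∑' a : ℕ, (-t)^a/(a.factorial : ℝ)) *
        ∑' r : ℕ × ℕ, (-x)^r.1/(r.1.factorial : ℝ) *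
          ((x*t)^r.2/((r.2.factorial : ℝ) * r.2.factorial)) :=
      (tsum_mul_tsum_of_summable_norm hsa hsbc).symm
    have e2 : ∑' r : ℕ × ℕ, (-x)^r.1/(r.1.factorial : ℝ) *
        ((x*t)^r.2/((r.2.factorial : ℝ) * r.2.factorial))
        = (∑' b : ℕ, (-x)^b/(b.factorial : ℝ)) *
          ∑' n : ℕ, (x*t)^n/((n.factorial : ℝ) * n.factorial) :=
      (tsum_mul_tsum_of_summable_norm hsb hsc).symm
    rw [e1, e2, ← exp_tsum (-t), ← exp_tsum (-x), ← besselI_sqrt hxt,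
      show -x - t = -x + -t by ring, Real.exp_add]
    ring
  -- fiberwise summation
  have hfib := hsg.hasSum.tsum_fiberwise (fun q : ℕ × ℕ × ℕ => (q.1 + q.2.2, q.2.1 + q.2.2))
  have hfib_eq : ∀ p : ℕ × ℕ,
      (∑' q : (fun q : ℕ × ℕ × ℕ => (q.1 + q.2.2, q.2.1 + q.2.2)) ⁻¹' {p}, g q)
        = c p * (((p.1+p.2).factorial : ℕ) : ℝ) := by
    rintro ⟨k, j⟩
    have hset : (fun q : ℕ × ℕ × ℕ => (q.1 + q.2.2, q.2.1 + q.2.2)) ⁻¹' {(k, j)}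
        = ↑((Finset.range (min k j + 1)).image (fun n => (k-n, j-n, n))) := by
      ext ⟨a, b, n⟩
      simp only [Set.mem_preimage, Set.mem_singleton_iff, Prod.mk.injEq, Finset.coe_image,
        Set.mem_image, Finset.mem_coe, Finset.mem_range]
      constructor
      · rintro ⟨h1, h2⟩
        exact ⟨n, by omega, by omega, by omega, rfl⟩
      · rintro ⟨n', hn', e1, e2, rfl⟩
        omega
    rw [hset, Finset.tsum_subtype']
    rw [Finset.sum_image (fun n₁ _ n₂ _ h => by
      simpa using congrArg (fun z : ℕ × ℕ × ℕ => z.2.2) h)]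
    simp only [hg, hc]
    exact fiber_sum_eq x t k j
  rw [funext hfib_eq] at hfib
  rw [hfib.tsum_eq, hT]
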